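/- arXiv:1607.04737 — 2 statements merged into one kernel-verified Lean document; each statement's English description precedes it below -/
import Mathlib

section
/- In the Pa^c(σ,γ) model, assume additionally that every column of c is nonzero, and set β_j = ∑_{i=1}^n c_{i,j}/σ_i > 0 for j = 1,…,n+1. Let ρ be the pushforward under the map z ↦ ∑_{j=1}^{n+1} z_j of the product measure ⊗_{j=1}^{n+1} Gamma(γ_j, 1/β_j) (so ρ is the law of a sum of n+1 independent gamma random variables with shapes γ_j and rates 1/β_j). Then for every x ≥ 0, the survival function of the minimum X_− = min_{1≤i≤n} X_i admits the exponential-mixture representation ν{min_{1≤i≤n} X_i > x} = ∫_{(0,∞)} e^{−λx} dρ(λ) = ∏_{j=1}^{n+1} (1 + β_j·x)^{−γ_j}. -/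
/-!
Given the gamma variables `y`, the events `X_i > x` are the independent exponential tails
`λ_i > x D_i(y) / σ_i` with `D_i(y) = ∑_j c_{i,j} y_j`, so the conditional survival
probability is `exp (-x ∑_i D_i(y) / σ_i) = exp (-x ∑_j β_j y_j)`. Averaging over the
independent `y_j` gives the product of gamma Laplace transforms `∏_j (1 + β_j x)^(-γ_j)`, and the
same product is the Laplace transform of a sum of independent `Gamma(γ_j, 1/β_j)` variables,
which is almost surely positive, so restricting its law to `(0, ∞)` changes nothing.
-/

open MeasureTheory ProbabilityTheory Real

/-- The `Pa^c(σ,γ)` model measure. -/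
noncomputable def paretoModelMeasure (n : ℕ) (γ : Fin (n + 1) → ℝ) :
    Measure ((Fin n → ℝ) × (Fin (n + 1) → ℝ)) :=
  (Measure.pi fun _ : Fin n => gammaMeasure 1 1).prod
    (Measure.pi fun j => gammaMeasure (γ j) 1)

/-- The coordinates `X_i(λ,y) = σ_i λ_i / ∑_j c_{i,j} y_j`. -/
noncomputable def paretoCoord (n : ℕ) (σ : Fin n → ℝ) (c : Fin n → Fin (n + 1) → ℝ)
    (i : Fin n) (p : (Fin n → ℝ) × (Fin (n + 1) → ℝ)) : ℝ :=
  σ i * p.1 i / ∑ j, c i j * p.2 j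

open Set

section Gamma

variable {a r t : ℝ}

lemma gammaPDF_mul_exp_neg_mul (ha : 0 < a) (hr : 0 < r) (ht : 0 ≤ t) (y : ℝ) :
    gammaPDF a r y * ENNReal.ofReal (exp (-(t * y)))
      = ENNReal.ofReal ((1 + t / r) ^ (-a)) * gammaPDF a (r + t) y := by
  rcases lt_or_ge y 0 with hy | hy
  · rw [gammaPDF_of_neg hy, gammaPDF_of_neg hy, zero_mul, mul_zero]
  rw [gammaPDF_of_nonneg hy, gammaPDF_of_nonneg hy,
    ← ENNReal.ofReal_mul (by positivity), ← ENNReal.ofReal_mul (by positivity)]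
  have hrt : 0 < r + t := by linarith
  have hscale : (1 + t / r) ^ (-a) * (r + t) ^ a = r ^ a := by
    rw [show 1 + t / r = (r + t) / r by field_simp, rpow_neg (by positivity),
      div_rpow hrt.le hr.le, inv_div]
    field_simp
  have hexp : exp (-(r * y)) * exp (-(t * y)) = exp (-((r + t) * y)) := by
    rw [← exp_add]; ring_nf
  congr 1
  calc r ^ a / Gamma a * y ^ (a - 1) * exp (-(r * y)) * exp (-(t * y))
      = ((1 + t / r) ^ (-a) * (r + t) ^ a) / Gamma a * y ^ (a - 1)
          * (exp (-(r * y)) * exp (-(t * y))) := by rw [hscale]; ring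
    _ = (1 + t / r) ^ (-a) * ((r + t) ^ a / Gamma a * y ^ (a - 1) * exp (-((r + t) * y))) := by
      rw [hexp]; ring

lemma lintegral_exp_neg_mul_gammaMeasure (ha : 0 < a) (hr : 0 < r) (ht : 0 ≤ t) :
    ∫⁻ y, ENNReal.ofReal (exp (-(t * y))) ∂gammaMeasure a r
      = ENNReal.ofReal ((1 + t / r) ^ (-a)) := by
  have hpdf : ∀ r, Measurable (gammaPDF a r) := fun r =>
    (measurable_gammaPDFReal a r).ennreal_ofReal
  rw [gammaMeasure, lintegral_withDensity_eq_lintegral_mul _ (hpdf r) (by fun_prop)]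
  simp only [Pi.mul_apply, gammaPDF_mul_exp_neg_mul ha hr ht]
  rw [lintegral_const_mul _ (hpdf _),
    lintegral_gammaPDF_eq_one ha (by linarith), mul_one]

lemma integral_exp_neg_mul_gammaMeasure (ha : 0 < a) (hr : 0 < r) (ht : 0 ≤ t) :
    ∫ y, exp (-(t * y)) ∂gammaMeasure a r = (1 + t / r) ^ (-a) := by
  rw [integral_eq_lintegral_of_nonneg_ae (ae_of_all _ fun _ => (exp_pos _).le)
      (by fun_prop), lintegral_exp_neg_mul_gammaMeasure ha hr ht,
    ENNReal.toReal_ofReal (by positivity)]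

lemma gammaMeasure_one_one_Ioi (ht : 0 ≤ t) :
    gammaMeasure 1 1 (Ioi t) = ENNReal.ofReal (exp (-t)) := by
  have hpdf : ∀ y ∈ Ioi t, gammaPDF 1 1 y = ENNReal.ofReal (exp (-y)) := fun y hy => by
    rw [gammaPDF_of_nonneg (ht.trans hy.le)]
    norm_num
  rw [gammaMeasure, withDensity_apply _ measurableSet_Ioi,
    setLIntegral_congr_fun measurableSet_Ioi hpdf,
    ← ofReal_integral_eq_lintegral_ofReal
      (by simpa [IntegrableOn] using exp_neg_integrableOn_Ioi t one_pos)
      (ae_of_all _ fun _ => (exp_pos _).le), integral_exp_neg_Ioi]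

lemma gammaMeasure_ae_pos (a r : ℝ) : ∀ᵐ y ∂gammaMeasure a r, 0 < y := by
  rw [ae_iff]
  simp only [not_lt]
  change gammaMeasure a r (Iic 0) = 0
  rw [gammaMeasure, withDensity_apply _ measurableSet_Iic,
    ← setLIntegral_congr Iio_ae_eq_Iic, lintegral_gammaPDF_of_nonpos le_rfl]

end Gamma

section Pi

variable {ι : Type*} [Fintype ι] {a r : ι → ℝ}

lemma pi_gammaMeasure_ae_pos (ha : ∀ j, 0 < a j) (hr : ∀ j, 0 < r j) :
    ∀ᵐ z ∂Measure.pi (fun j => gammaMeasure (a j) (r j)), ∀ j, 0 < z j := by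
  have := fun j => isProbabilityMeasure_gammaMeasure (ha j) (hr j)
  exact ae_all_iff.2 fun j => Measure.tendsto_eval_ae_ae.eventually (gammaMeasure_ae_pos _ _)

lemma integral_exp_neg_sum_mul_pi_gammaMeasure (ha : ∀ j, 0 < a j) (hr : ∀ j, 0 < r j)
    {t : ι → ℝ} (ht : ∀ j, 0 ≤ t j) :
    ∫ z, exp (-∑ j, t j * z j) ∂Measure.pi (fun j => gammaMeasure (a j) (r j))
      = ∏ j, (1 + t j / r j) ^ (-a j) := by
  have := fun j => isProbabilityMeasure_gammaMeasure (ha j) (hr j)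
  simp only [← Finset.sum_neg_distrib, exp_sum, ← neg_mul]
  rw [integral_fintype_prod_eq_prod (fun j y => exp (-t j * y))]
  exact Finset.prod_congr rfl fun j _ => by
    simpa only [neg_mul] using integral_exp_neg_mul_gammaMeasure (ha j) (hr j) (ht j)

lemma integrable_exp_neg_sum_mul_pi_gammaMeasure (ha : ∀ j, 0 < a j) (hr : ∀ j, 0 < r j)
    {t : ι → ℝ} (ht : ∀ j, 0 ≤ t j) :
    Integrable (fun z => exp (-∑ j, t j * z j))
      (Measure.pi fun j => gammaMeasure (a j) (r j)) := by
  have := fun j => isProbabilityMeasure_gammaMeasure (ha j) (hr j)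
  refine (integrable_const 1).mono' (Continuous.aestronglyMeasurable (by fun_prop)) ?_
  filter_upwards [pi_gammaMeasure_ae_pos ha hr] with z hz
  rw [norm_of_nonneg (exp_pos _).le, exp_le_one_iff, neg_nonpos]
  exact Finset.sum_nonneg fun j _ => mul_nonneg (ht j) (hz j).le

lemma setIntegral_Ioi_exp_neg_mul_map_sum_pi_gammaMeasure [Nonempty ι]
    (ha : ∀ j, 0 < a j) (hr : ∀ j, 0 < r j) {x : ℝ} (hx : 0 ≤ x) :
    ∫ l in Ioi 0, exp (-(l * x))
        ∂Measure.map (fun z => ∑ j, z j) (Measure.pi fun j => gammaMeasure (a j) (r j))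
      = ∏ j, (1 + x / r j) ^ (-a j) := by
  have hsum : Measurable fun z : ι → ℝ => ∑ j, z j := by fun_prop
  have hpos : ∀ᵐ l ∂Measure.map (fun z => ∑ j, z j)
      (Measure.pi fun j => gammaMeasure (a j) (r j)), l ∈ Ioi 0 := by
    refine (ae_map_iff hsum.aemeasurable measurableSet_Ioi).2 ?_
    filter_upwards [pi_gammaMeasure_ae_pos ha hr] with z hz
    exact Finset.sum_pos (fun j _ => hz j) Finset.univ_nonempty
  rw [Measure.restrict_eq_self_of_ae_mem hpos, integral_map hsum.aemeasurable (by fun_prop),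
    ← integral_exp_neg_sum_mul_pi_gammaMeasure ha hr fun _ => hx]
  simp only [Finset.sum_mul, mul_comm x]

lemma pi_gammaMeasure_one_one_pi_Ioi {t : ι → ℝ} (ht : ∀ i, 0 ≤ t i) :
    Measure.pi (fun _ : ι => gammaMeasure 1 1) (univ.pi fun i => Ioi (t i))
      = ENNReal.ofReal (exp (-∑ i, t i)) := by
  have := isProbabilityMeasure_gammaMeasure (one_pos (α := ℝ)) one_pos
  rw [Measure.pi_pi, ← Finset.sum_neg_distrib, exp_sum,
    ENNReal.ofReal_prod_of_nonneg fun i _ => (exp_pos _).le]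
  exact Finset.prod_congr rfl fun i _ => gammaMeasure_one_one_Ioi (ht i)

end Pi

section Model

variable {n : ℕ} {σ : Fin n → ℝ} {c : Fin n → Fin (n + 1) → ℝ} {x : ℝ}

lemma measurableSet_setOf_forall_lt_paretoCoord :
    MeasurableSet {p | ∀ i, x < paretoCoord n σ c i p} := by
  simp only [paretoCoord]
  measurability

lemma preimage_prodMk_setOf_forall_lt_paretoCoord (hσ : ∀ i, 0 < σ i)
    {y : Fin (n + 1) → ℝ} (hy : ∀ i, 0 < ∑ j, c i j * y j) :
    (fun l => (l, y)) ⁻¹' {p | ∀ i, x < paretoCoord n σ c i p}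
      = univ.pi fun i => Ioi (x * (∑ j, c i j * y j) / σ i) := by
  ext l
  simp only [mem_preimage, mem_ofPred_eq, mem_pi, mem_univ, true_implies, mem_Ioi,
    paretoCoord]
  refine forall_congr' fun i => ?_
  rw [lt_div_iff₀ (hy i), div_lt_iff₀ (hσ i), mul_comm (σ i)]

lemma paretoModelMeasure_survival_eq_lintegral (hσ : ∀ i, 0 < σ i) {γ : Fin (n + 1) → ℝ}
    (hγ : ∀ j, 0 < γ j) (hc : ∀ i j, 0 ≤ c i j) (hrow : ∀ i, ∃ j, 0 < c i j) (hx : 0 ≤ x) :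
    paretoModelMeasure n γ {p | ∀ i, x < paretoCoord n σ c i p}
      = ∫⁻ y, ENNReal.ofReal (exp (-∑ j, (x * ∑ i, c i j / σ i) * y j))
          ∂Measure.pi fun j => gammaMeasure (γ j) 1 := by
  have := isProbabilityMeasure_gammaMeasure (one_pos (α := ℝ)) one_pos
  have := fun j => isProbabilityMeasure_gammaMeasure (hγ j) one_pos
  rw [paretoModelMeasure, Measure.prod_apply_symm measurableSet_setOf_forall_lt_paretoCoord]
  refine lintegral_congr_ae ?_
  filter_upwards [pi_gammaMeasure_ae_pos hγ fun _ => one_pos] with y hy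
  have hden : ∀ i, 0 < ∑ j, c i j * y j := fun i => by
    obtain ⟨j, hj⟩ := hrow i
    exact Finset.sum_pos' (fun k _ => mul_nonneg (hc i k) (hy k).le)
      ⟨j, Finset.mem_univ j, mul_pos hj (hy j)⟩
  rw [preimage_prodMk_setOf_forall_lt_paretoCoord hσ hden, pi_gammaMeasure_one_one_pi_Ioi
    fun i => div_nonneg (mul_nonneg hx (hden i).le) (hσ i).le]
  simp only [Finset.mul_sum, Finset.sum_div, Finset.sum_mul]
  rw [Finset.sum_comm]
  congr 3
  exact Finset.sum_congr rfl fun j _ => Finset.sum_congr rfl fun i _ => by ring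

end Model

theorem minimum_exponential_mixture_general
    (n : ℕ)
    (σ : Fin n → ℝ) (hσ : ∀ i, 0 < σ i)
    (γ : Fin (n + 1) → ℝ) (hγ : ∀ j, 0 < γ j)
    (c : Fin n → Fin (n + 1) → ℝ) (hc : ∀ i j, c i j = 0 ∨ c i j = 1)
    (hrow : ∀ i, ∃ j, c i j = 1) (hcol : ∀ j, ∃ i, c i j = 1)
    (β : Fin (n + 1) → ℝ) (hβ : ∀ j, β j = ∑ i, c i j / σ i)
    (ρ : Measure ℝ)
    (hρ : ρ = Measure.map (fun z : Fin (n + 1) → ℝ => ∑ j, z j)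
        (Measure.pi fun j => gammaMeasure (γ j) (1 / β j)))
    (x : ℝ) (hx : 0 ≤ x) :
    paretoModelMeasure n γ {p | ∀ i, x < paretoCoord n σ c i p}
        = ENNReal.ofReal (∫ l in Set.Ioi (0 : ℝ), Real.exp (-(l * x)) ∂ρ)
      ∧ ∫ l in Set.Ioi (0 : ℝ), Real.exp (-(l * x)) ∂ρ
          = ∏ j, (1 + β j * x) ^ (-(γ j)) := by
  have hc_nonneg : ∀ i j, 0 ≤ c i j := fun i j => by rcases hc i j with h | h <;> simp [h]
  have hβ_pos : ∀ j, 0 < β j := fun j => by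
    obtain ⟨i, hi⟩ := hcol j
    rw [hβ j]
    exact Finset.sum_pos' (fun k _ => div_nonneg (hc_nonneg k j) (hσ k).le)
      ⟨i, Finset.mem_univ i, by simpa [hi] using hσ i⟩
  have hlaplace : ∫ l in Ioi 0, exp (-(l * x)) ∂ρ = ∏ j, (1 + β j * x) ^ (-γ j) := by
    rw [hρ, setIntegral_Ioi_exp_neg_mul_map_sum_pi_gammaMeasure hγ
      (fun j => one_div_pos.2 (hβ_pos j)) hx]
    simp only [div_div_eq_mul_div, div_one, mul_comm x]
  have ht : ∀ j, 0 ≤ x * β j := fun j => mul_nonneg hx (hβ_pos j).le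
  refine ⟨?_, hlaplace⟩
  rw [hlaplace, paretoModelMeasure_survival_eq_lintegral hσ hγ hc_nonneg
      (fun i => (hrow i).imp fun _ hj => by simp [hj]) hx]
  simp only [← hβ]
  rw [← ofReal_integral_eq_lintegral_ofReal
      (integrable_exp_neg_sum_mul_pi_gammaMeasure hγ (fun _ => one_pos) ht)
      (ae_of_all _ fun _ => (exp_pos _).le),
    integral_exp_neg_sum_mul_pi_gammaMeasure hγ (fun _ => one_pos) ht]
  simp only [div_one, mul_comm x]

/-- the survival function of the minimum `X_- = min_i X_i` is the Laplace
transform of the law `ρ` of a sum of `n+1` independent gammas with shapes `γ_j` and rates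
`1/β_j`, and equals `∏_j (1 + β_j x)^{-γ_j}`. -/
theorem minimum_exponential_mixture
    (n : ℕ) (hn : 1 ≤ n)
    (σ : Fin n → ℝ) (hσ : ∀ i, 0 < σ i)
    (γ : Fin (n + 1) → ℝ) (hγ : ∀ j, 0 < γ j)
    (c : Fin n → Fin (n + 1) → ℝ) (hc : ∀ i j, c i j = 0 ∨ c i j = 1)
    (hrow : ∀ i, ∃ j, c i j = 1) (hcol : ∀ j, ∃ i, c i j = 1)
    (β : Fin (n + 1) → ℝ) (hβ : ∀ j, β j = ∑ i, c i j / σ i)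
    (ρ : Measure ℝ)
    (hρ : ρ = Measure.map (fun z : Fin (n + 1) → ℝ => ∑ j, z j)
        (Measure.pi fun j => gammaMeasure (γ j) (1 / β j)))
    (x : ℝ) (hx : 0 ≤ x) :
    paretoModelMeasure n γ {p | ∀ i, x < paretoCoord n σ c i p}
        = ENNReal.ofReal (∫ l in Set.Ioi (0 : ℝ), Real.exp (-(l * x)) ∂ρ)
      ∧ ∫ l in Set.Ioi (0 : ℝ), Real.exp (-(l * x)) ∂ρ
          = ∏ j, (1 + β j * x) ^ (-(γ j)) :=
  minimum_exponential_mixture_general n σ hσ γ hγ c hc hrow hcol β hβ ρ hρ x hx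
end

section
/- In the Pa^c(σ,γ) model, assume γ*_i = ∑_{j=1}^{n+1} c_{i,j}γ_j > 1 for every i (so all X_i, and hence X_+ = max_{1≤i≤n} X_i, are integrable). Fix q ∈ [0,1) and put t_q = VaR_q[X_+] = inf{x : ν{X_+ ≤ x} ≥ q}. Then the Conditional Tail Expectation of the maximum decomposes as an alternating sum over sub-minima: (1−q)·CTE_q[X_+] := ∫_{{X_+ > t_q}} X_+ dν = ∑_{∅ ≠ S ⊆ {1,…,n}} (−1)^{|S|−1} · ∫_{{X_{S−} > t_q}} X_{S−} dν, where X_{S−} = min_{i∈S} X_i. -/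
/-!
For reals `z_i` and any function `g`, `g (max z) = ∑_{S ≠ ∅} (-1)^(|S|-1) g (min_S z)`: if `a` is a
maximiser, adjoining `a` to a nonempty `S ∌ a` leaves `min_S z` unchanged and flips the sign, so
everything cancels except `S = {a}`. Taking `g = 1_{(t,∞)} · id` pointwise and integrating gives the
identity for every threshold `t`, as soon as each `X_i` is integrable.

For integrability, `X_i = σ_i λ_i · (∑_{j ∈ J_i} y_j)⁻¹` with `J_i = {j | c_{i,j} = 1}` and
independent factors. Weighted AM-GM with weights `γ_j / γ*_i` gives
`(∑_{j ∈ J_i} y_j)⁻¹ ≤ ∏_{j ∈ J_i} y_j ^ (-γ_j / γ*_i)`, and `y ↦ y ^ (-γ_j / γ*_i)` is integrable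
against `Gamma(γ_j, 1)` because `γ_j / γ*_i < γ_j`.
-/

open MeasureTheory ProbabilityTheory Real

theorem Finset.apply_sup'_eq_sum_powerset_sInf {ι α β : Type*} [DecidableEq ι]
    [ConditionallyCompleteLinearOrder α] [AddCommGroup β] (g : α → β) {s : Finset ι}
    (hs : s.Nonempty) (f : ι → α) :
    g (s.sup' hs f) = ∑ t ∈ s.powerset.filter Finset.Nonempty,
      (-1 : ℤ) ^ (t.card - 1) • g (sInf (f '' t)) := by
  obtain ⟨a, ha, hmax⟩ := s.exists_max_image f hs
  have hsup : s.sup' hs f = f a := le_antisymm (Finset.sup'_le hs f hmax) (Finset.le_sup' f ha)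
  have hpair : ∀ t ∈ (s.erase a).powerset,
      ((if t.Nonempty then (-1 : ℤ) ^ (t.card - 1) • g (sInf (f '' t)) else 0)
        + (-1 : ℤ) ^ ((insert a t).card - 1) • g (sInf (f '' ↑(insert a t))))
        = if t = ∅ then g (f a) else 0 := by
    intro t ht
    have hat : a ∉ t := fun h => Finset.notMem_erase a s (Finset.mem_powerset.mp ht h)
    rcases t.eq_empty_or_nonempty with rfl | hne
    · simp
    have hmin : sInf (f '' ↑(insert a t)) = sInf (f '' t) := by
      rw [Finset.coe_insert, Set.image_insert_eq, csInf_insert (t.finite_toSet.image f).bddBelow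
        (hne.to_set.image f), inf_eq_right]
      obtain ⟨i, hi⟩ := hne
      exact (csInf_le (t.finite_toSet.image f).bddBelow (Set.mem_image_of_mem f hi)).trans
        (hmax i (Finset.mem_of_mem_erase (Finset.mem_powerset.mp ht hi)))
    rw [if_pos hne, if_neg hne.ne_empty, hmin, Finset.card_insert_of_notMem hat,
      Nat.add_sub_cancel, ← Nat.sub_add_cancel hne.card_pos, pow_succ]
    simp
  rw [hsup, Finset.sum_filter, ← Finset.insert_erase ha,
    Finset.sum_powerset_insert (Finset.notMem_erase a s)]
  simp only [Finset.insert_nonempty, if_true]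
  rw [← Finset.sum_add_distrib, Finset.sum_congr rfl hpair, Finset.sum_ite_eq' _ ∅,
    if_pos (Finset.empty_mem_powerset _)]

theorem measurable_gammaPDF (a r : ℝ) : Measurable (gammaPDF a r) :=
  (measurable_gammaPDFReal a r).ennreal_ofReal

theorem ae_pos_gammaMeasure (a r : ℝ) : ∀ᵐ x ∂gammaMeasure a r, 0 < x := by
  rw [gammaMeasure, ae_withDensity_iff (measurable_gammaPDF a r)]
  filter_upwards [volume.ae_ne 0] with x hx0 hpdf
  by_contra hx
  exact hpdf (gammaPDF_of_neg (lt_of_le_of_ne (not_lt.mp hx) hx0))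

theorem integrable_rpow_gammaMeasure {a r p : ℝ} (ha : 0 < a) (hr : 0 < r) (hp : -a < p) :
    Integrable (fun x : ℝ => x ^ p) (gammaMeasure a r) := by
  rw [← Measure.restrict_eq_self_of_ae_mem (s := Set.Ioi 0) (ae_pos_gammaMeasure a r), gammaMeasure,
    restrict_withDensity measurableSet_Ioi,
    integrable_withDensity_iff (measurable_gammaPDF a r)
      (ae_of_all _ fun _ => ENNReal.ofReal_lt_top)]
  refine IntegrableOn.congr_fun (((integrableOn_rpow_mul_exp_neg_mul_rpow (s := p + (a - 1))
    (by linarith) one_pos hr).const_mul (r ^ a / Gamma a))) (fun x (hx : 0 < x) => ?_)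
    measurableSet_Ioi
  rw [gammaPDF, ENNReal.toReal_ofReal (gammaPDFReal_nonneg ha hr x), gammaPDFReal, if_pos hx.le,
    rpow_add hx, rpow_one]
  ring_nf

theorem integrable_inv_sum_gammaMeasure {ι : Type*} [Fintype ι] {a r : ι → ℝ}
    (ha : ∀ j, 0 < a j) (hr : ∀ j, 0 < r j) {J : Finset ι} (hJ : 1 < ∑ j ∈ J, a j) :
    Integrable (fun y : ι → ℝ => (∑ j ∈ J, y j)⁻¹)
      (Measure.pi fun j => gammaMeasure (a j) (r j)) := by
  classical
  have := fun j => isProbabilityMeasure_gammaMeasure (ha j) (hr j)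
  set A := ∑ j ∈ J, a j
  have hA : 0 < A := one_pos.trans hJ
  have hmaj : Integrable (fun y : ι → ℝ => ∏ j, if j ∈ J then y j ^ (-(a j / A)) else 1)
      (Measure.pi fun j => gammaMeasure (a j) (r j)) := by
    refine Integrable.fintype_prod (μ := fun j => gammaMeasure (a j) (r j))
      (f := fun j x => if j ∈ J then x ^ (-(a j / A)) else 1) fun j => ?_
    split_ifs
    · exact integrable_rpow_gammaMeasure (ha j) (hr j)
        (neg_lt_neg (div_lt_self (ha j) hJ))
    · exact integrable_const 1
  refine hmaj.mono (by fun_prop) ?_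
  have hpos : ∀ᵐ y ∂(Measure.pi fun j => gammaMeasure (a j) (r j)), ∀ j, 0 < y j :=
    ae_all_iff.2 fun j => Measure.tendsto_eval_ae_ae.eventually (ae_pos_gammaMeasure _ _)
  filter_upwards [hpos] with y hy
  have hgeom : 0 < ∏ j ∈ J, y j ^ (a j / A) := Finset.prod_pos fun j _ => rpow_pos_of_pos (hy j) _
  have hamgm : ∏ j ∈ J, y j ^ (a j / A) ≤ ∑ j ∈ J, y j := by
    refine (geom_mean_le_arith_mean_weighted J (fun j => a j / A) y
      (fun j _ => (div_pos (ha j) hA).le) (by rw [← Finset.sum_div, div_self hA.ne'])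
      (fun j _ => (hy j).le)).trans (Finset.sum_le_sum fun j hj => ?_)
    exact mul_le_of_le_one_left (hy j).le
      ((div_le_one hA).2 (Finset.single_le_sum (fun k _ => (ha k).le) hj))
  rw [Finset.prod_ite_mem, Finset.univ_inter,
    Real.norm_of_nonneg (inv_pos.2 (hgeom.trans_le hamgm)).le,
    Real.norm_of_nonneg (Finset.prod_nonneg fun j _ => (rpow_pos_of_pos (hy j) _).le)]
  calc (∑ j ∈ J, y j)⁻¹ ≤ (∏ j ∈ J, y j ^ (a j / A))⁻¹ := inv_anti₀ hgeom hamgm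
    _ = ∏ j ∈ J, y j ^ (-(a j / A)) := by
      rw [← Finset.prod_inv_distrib]
      exact Finset.prod_congr rfl fun j _ => (rpow_neg (hy j).le _).symm

section TailIntegral

variable {Ω ι : Type*} [MeasurableSpace Ω] {μ : Measure Ω}

theorem setIntegral_gt_eq_integral_indicator_Ioi {f : Ω → ℝ} (hf : Measurable f) (t : ℝ) :
    ∫ ω in {ω | t < f ω}, f ω ∂μ = ∫ ω, (Set.Ioi t).indicator id (f ω) ∂μ := by
  rw [← integral_indicator (measurableSet_lt measurable_const hf)]
  rfl

theorem setIntegral_gt_sup'_eq_sum_powerset [DecidableEq ι] {s : Finset ι} (hs : s.Nonempty)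
    {X : ι → Ω → ℝ} (hXm : ∀ i ∈ s, Measurable (X i)) (hXi : ∀ i ∈ s, Integrable (X i) μ)
    (t : ℝ) :
    ∫ ω in {ω | t < s.sup' hs (X · ω)}, s.sup' hs (X · ω) ∂μ
      = ∑ S ∈ s.powerset.filter Finset.Nonempty, (-1 : ℝ) ^ (S.card - 1)
          * ∫ ω in {ω | t < sInf ((X · ω) '' S)}, sInf ((X · ω) '' S) ∂μ := by
  have hmin : ∀ S ∈ s.powerset.filter Finset.Nonempty,
      Measurable (fun ω => sInf ((X · ω) '' S)) ∧ Integrable (fun ω => sInf ((X · ω) '' S)) μ := by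
    intro S hS
    obtain ⟨hSs, hne⟩ := Finset.mem_filter.mp hS
    have heq : (fun ω => sInf ((X · ω) '' S)) = S.inf' hne X := by
      ext ω
      rw [Finset.inf'_apply, Finset.inf'_eq_csInf_image]
    rw [heq]
    exact ⟨Finset.inf'_induction hne _ (fun _ hf _ hg => hf.inf hg)
        fun i hi => hXm i (Finset.mem_powerset.mp hSs hi),
      Finset.inf'_induction hne (p := fun f => Integrable f μ) _ (fun _ hf _ hg => hf.inf hg)
        fun i hi => hXi i (Finset.mem_powerset.mp hSs hi)⟩
  have hmax : Measurable (fun ω => s.sup' hs (X · ω)) := by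
    simpa only [← Finset.sup'_apply] using Finset.measurable_sup' hs hXm
  rw [setIntegral_gt_eq_integral_indicator_Ioi hmax]
  simp_rw [Finset.apply_sup'_eq_sum_powerset_sInf ((Set.Ioi t).indicator id) hs, zsmul_eq_mul]
  have hind : ∀ S ∈ s.powerset.filter Finset.Nonempty,
      Integrable (fun ω => (Set.Ioi t).indicator id (sInf ((X · ω) '' S))) μ := fun S hS =>
    (hmin S hS).2.indicator (measurableSet_lt measurable_const (hmin S hS).1)
  rw [integral_finsetSum _ fun S hS => (hind S hS).const_mul _]
  refine Finset.sum_congr rfl fun S hS => ?_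
  rw [integral_const_mul, setIntegral_gt_eq_integral_indicator_Ioi (hmin S hS).1]
  push_cast
  rfl

end TailIntegral

theorem Finset.sum_mul_eq_sum_filter_eq_one {ι R : Type*} [Fintype ι] [Semiring R] [Nontrivial R]
    [DecidableEq R] {b : ι → R} (hb : ∀ j, b j = 0 ∨ b j = 1) (f : ι → R) :
    ∑ j, b j * f j = ∑ j ∈ Finset.univ.filter (b · = 1), f j := by
  rw [Finset.sum_filter]
  refine Finset.sum_congr rfl fun j _ => ?_
  rcases hb j with h | h <;> simp [h]

theorem measurable_paretoCoord (n : ℕ) (σ : Fin n → ℝ) (c : Fin n → Fin (n + 1) → ℝ) (i : Fin n) :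
    Measurable (paretoCoord n σ c i) := by
  unfold paretoCoord
  fun_prop

theorem integrable_paretoCoord {n : ℕ} (σ : Fin n → ℝ) {γ : Fin (n + 1) → ℝ} (hγ : ∀ j, 0 < γ j)
    {c : Fin n → Fin (n + 1) → ℝ} (hc : ∀ i j, c i j = 0 ∨ c i j = 1) {i : Fin n}
    (hi : 1 < ∑ j, c i j * γ j) :
    Integrable (paretoCoord n σ c i) (paretoModelMeasure n γ) := by
  have := fun j => isProbabilityMeasure_gammaMeasure (hγ j) one_pos
  have := isProbabilityMeasure_gammaMeasure one_pos one_pos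
  have hid : Integrable (fun x : ℝ => x) (gammaMeasure 1 1) := by
    simpa using integrable_rpow_gammaMeasure (p := 1) one_pos one_pos (by norm_num)
  have hexp : Integrable (fun l : Fin n → ℝ => σ i * l i) (Measure.pi fun _ => gammaMeasure 1 1) :=
    (integrable_comp_eval (i := i) (f := fun x => x) hid).const_mul (σ i)
  have hy := integrable_inv_sum_gammaMeasure hγ (fun _ => one_pos)
    (J := Finset.univ.filter (c i · = 1)) (by rwa [← Finset.sum_mul_eq_sum_filter_eq_one (hc i)])
  rw [paretoModelMeasure]
  convert hexp.mul_prod hy using 2 with p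
  rw [paretoCoord, Finset.sum_mul_eq_sum_filter_eq_one (hc i), div_eq_mul_inv]

theorem conditional_tail_expectation_maximum_general
    (n : ℕ) (hn : 1 ≤ n)
    (σ : Fin n → ℝ)
    (γ : Fin (n + 1) → ℝ) (hγ : ∀ j, 0 < γ j)
    (c : Fin n → Fin (n + 1) → ℝ) (hc : ∀ i j, c i j = 0 ∨ c i j = 1)
    (hint : ∀ i, 1 < ∑ j, c i j * γ j)
    (Xmax : (Fin n → ℝ) × (Fin (n + 1) → ℝ) → ℝ)
    (hXmax : ∀ w, Xmax w = ⨆ i, paretoCoord n σ c i w)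
    (Xmin : Finset (Fin n) → (Fin n → ℝ) × (Fin (n + 1) → ℝ) → ℝ)
    (hXmin : ∀ S w, Xmin S w = sInf ((fun i => paretoCoord n σ c i w) '' (S : Set (Fin n))))
    (tq : ℝ) :
    ∫ w in {w | tq < Xmax w}, Xmax w ∂(paretoModelMeasure n γ)
      = ∑ S ∈ Finset.univ.powerset.filter Finset.Nonempty,
          (-1 : ℝ) ^ (S.card - 1)
            * ∫ w in {w | tq < Xmin S w}, Xmin S w ∂(paretoModelMeasure n γ) := by
  have : Nonempty (Fin n) := ⟨⟨0, hn⟩⟩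
  obtain rfl : Xmax = fun w => Finset.univ.sup' Finset.univ_nonempty (paretoCoord n σ c · w) :=
    funext fun w => by rw [hXmax, Finset.sup'_univ_eq_ciSup]
  obtain rfl : Xmin = fun (S : Finset (Fin n)) w => sInf ((paretoCoord n σ c · w) '' S) :=
    funext fun S => funext (hXmin S)
  exact setIntegral_gt_sup'_eq_sum_powerset Finset.univ_nonempty
    (fun i _ => measurable_paretoCoord n σ c i) (fun i _ => integrable_paretoCoord σ hγ hc (hint i))
    tq

/-- the tail expectation of the maximum `X_+ = max_i X_i` decomposes as an
alternating sum over the sub-minima `X_{S-} = min_{i∈S} X_i`: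
`∫_{X_+ > t_q} X_+ dν = ∑_{∅≠S} (-1)^{|S|-1} ∫_{X_{S-} > t_q} X_{S-} dν`. -/
theorem conditional_tail_expectation_maximum
    (n : ℕ) (hn : 1 ≤ n)
    (σ : Fin n → ℝ) (hσ : ∀ i, 0 < σ i)
    (γ : Fin (n + 1) → ℝ) (hγ : ∀ j, 0 < γ j)
    (c : Fin n → Fin (n + 1) → ℝ) (hc : ∀ i j, c i j = 0 ∨ c i j = 1)
    (hrow : ∀ i, ∃ j, c i j = 1)
    (hint : ∀ i, 1 < ∑ j, c i j * γ j)
    (Xmax : (Fin n → ℝ) × (Fin (n + 1) → ℝ) → ℝ)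
    (hXmax : ∀ w, Xmax w = ⨆ i, paretoCoord n σ c i w)
    (Xmin : Finset (Fin n) → (Fin n → ℝ) × (Fin (n + 1) → ℝ) → ℝ)
    (hXmin : ∀ S w, Xmin S w = sInf ((fun i => paretoCoord n σ c i w) '' (S : Set (Fin n))))
    (q : ℝ) (hq : q ∈ Set.Ico (0 : ℝ) 1)
    (tq : ℝ)
    (htq : tq = sInf {x : ℝ |
        q ≤ (paretoModelMeasure n γ {w | Xmax w ≤ x}).toReal}) :
    ∫ w in {w | tq < Xmax w}, Xmax w ∂(paretoModelMeasure n γ)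
      = ∑ S ∈ Finset.univ.powerset.filter Finset.Nonempty,
          (-1 : ℝ) ^ (S.card - 1)
            * ∫ w in {w | tq < Xmin S w}, Xmin S w ∂(paretoModelMeasure n γ) :=
  conditional_tail_expectation_maximum_general n hn σ γ hγ c hc hint Xmax hXmax Xmin hXmin tq
end
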